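/- arXiv:2006.12239 — 8 statements merged into one kernel-verified Lean document; each statement's English description precedes it below -/
import Mathlib

section
/- Let F be a finite field of order q^2, f a nonzero polynomial over F, and r a nonzero element of the algebraic closure of F that is a root of f with multiplicity m. Then r^{−q} is a root of the conjugate-reciprocal polynomial f^{*τ} with multiplicity m. -/
/-! Since `|F| = q²`, `x ↦ x ^ q` is a ring endomorphism `φ` of the algebraic closure, and
`f^{*τ}` is the reversal of `f` with `φ` applied to its coefficients. Mapping by the injective `φ`
moves a root `r` of multiplicity `m` to `r ^ q` with the same multiplicity, and reversal moves a
nonzero root `s` to `s⁻¹` with the same multiplicity, because the reversal of `X - s` is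
`-s (X - s⁻¹)`. -/

open Polynomial

namespace Polynomial

theorem reverse_pow {R : Type*} [Semiring R] [NoZeroDivisors R] (p : R[X]) (n : ℕ) :
    (p ^ n).reverse = p.reverse ^ n := by
  induction n with
  | zero => rw [pow_zero, pow_zero, ← C_1, reverse_C]
  | succ n ih => rw [pow_succ, reverse_mul_of_domain, ih, pow_succ]

theorem reverse_X_sub_C {K : Type*} [Field K] {s : K} (hs : s ≠ 0) :
    (X - C s).reverse = C (-s) * (X - C s⁻¹) := by
  have hX : (X : K[X]).reverse = 1 := by rw [← mul_one X, reverse_X_mul, ← C_1, reverse_C]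
  rw [sub_eq_add_neg, ← C_neg, reverse_add_C, hX, natDegree_X, pow_one, mul_sub, C_neg, neg_mul,
    neg_mul, ← C_mul, mul_inv_cancel₀ hs, C_1]
  ring

theorem rootMultiplicity_reverse_inv {K : Type*} [Field K] (p : K[X]) {s : K} (hs : s ≠ 0) :
    p.reverse.rootMultiplicity s⁻¹ = p.rootMultiplicity s := by
  rcases eq_or_ne p 0 with rfl | hp
  · simp
  obtain ⟨u, hpu, hu⟩ := exists_eq_pow_rootMultiplicity_mul_and_not_dvd p hp s
  set m := p.rootMultiplicity s
  have hrev : p.reverse = C ((-s) ^ m) * u.reverse * (X - C s⁻¹) ^ m := by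
    rw [hpu, reverse_mul_of_domain, reverse_pow, reverse_X_sub_C hs, mul_pow, C_pow]
    ring
  have hu_eval : ¬ (C ((-s) ^ m) * u.reverse).IsRoot s⁻¹ := by
    let _ : Invertible s := invertibleOfNonzero hs
    have hus : ¬ u.IsRoot s := fun h ↦ hu (dvd_iff_isRoot.2 h)
    rw [← invOf_eq_inv, IsRoot, eval_mul, eval_C, mul_eq_zero, not_or]
    exact ⟨pow_ne_zero _ (neg_ne_zero.2 hs),
      (eval₂_reverse_eq_zero_iff (RingHom.id K) s u).not.2 hus⟩
  have hu0 : C ((-s) ^ m) * u.reverse ≠ 0 := fun h ↦ hu_eval (by rw [h, IsRoot, eval_zero])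
  rw [hrev, rootMultiplicity_mul_X_sub_C_pow hu0, rootMultiplicity_eq_zero hu_eval, zero_add]

theorem sum_range_C_coeff_natDegree_sub_mul_X_pow {R : Type*} [Semiring R] (p : R[X]) :
    ∑ k ∈ Finset.range (p.natDegree + 1), C (p.coeff (p.natDegree - k)) * X ^ k = p.reverse := by
  ext i
  simp only [finsetSum_coeff, coeff_C_mul_X_pow, Finset.sum_ite_eq, Finset.mem_range,
    coeff_reverse]
  rcases Nat.lt_or_ge p.natDegree i with hi | hi
  · rw [if_neg (by omega), revAt_eq_self_of_lt hi, coeff_eq_zero_of_natDegree_lt hi]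
  · rw [if_pos (by omega), revAt_le hi]

end Polynomial

theorem FiniteField.exists_ringHom_eq_pow_of_card_eq_sq {F : Type*} [Field F] [Fintype F]
    {q : ℕ} (hq : IsPrimePow q) (hF : Fintype.card F = q ^ 2) (L : Type*) [CommRing L]
    [Nontrivial L] [Algebra F L] : ∃ φ : L →+* L, ∀ x, φ x = x ^ q := by
  obtain ⟨p, e, hp, -, rfl⟩ := hq
  have : Fact p.Prime := ⟨hp.nat_prime⟩
  have : CharP F p := charP_of_card_eq_prime_pow (hF.trans (pow_mul p e 2).symm)
  have : CharP L p := charP_of_injective_algebraMap (algebraMap F L).injective p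
  have : ExpChar L p := .prime hp.nat_prime
  exact ⟨iterateFrobenius L p e, iterateFrobenius_def p e⟩

theorem stmt4_general (q : ℕ) (hq : IsPrimePow q) (F : Type) [Field F] [Fintype F]
    (hF : Fintype.card F = q ^ 2) (f : Polynomial F)
    (r : AlgebraicClosure F) (hr : r ≠ 0) (m : ℕ)
    (hm : (f.map (algebraMap F (AlgebraicClosure F))).rootMultiplicity r = m) :
    ((∑ k ∈ Finset.range (f.natDegree + 1),
        Polynomial.C ((f.coeff (f.natDegree - k)) ^ q) * Polynomial.X ^ k).map
          (algebraMap F (AlgebraicClosure F))).rootMultiplicity (r ^ (-(q : ℤ))) = m := by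
  obtain ⟨φ, hφ⟩ := FiniteField.exists_ringHom_eq_pow_of_card_eq_sq hq hF (AlgebraicClosure F)
  set ι := algebraMap F (AlgebraicClosure F)
  have hconj : (∑ k ∈ Finset.range (f.natDegree + 1),
      C (f.coeff (f.natDegree - k) ^ q) * X ^ k).map ι = ((f.map ι).map φ).reverse := by
    rw [← sum_range_C_coeff_natDegree_sub_mul_X_pow, natDegree_map_eq_of_injective φ.injective,
      natDegree_map_eq_of_injective ι.injective]
    simp [Polynomial.map_sum, hφ]
  have hφr : φ r ≠ 0 := by rw [hφ]; exact pow_ne_zero q hr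
  rw [hconj, zpow_neg, zpow_natCast, ← hφ, rootMultiplicity_reverse_inv _ hφr,
    ← eq_rootMultiplicity_map φ.injective, hm]

/-- For `F` of order `q^2`, a nonzero polynomial `f` over `F`, and a nonzero root `r` of `f`
in the algebraic closure of multiplicity `m`, the element `r^{-q}` is a root of the
conjugate-reciprocal `f^{*τ}` of multiplicity `m`. -/
theorem stmt4 (q : ℕ) (hq : IsPrimePow q) (F : Type) [Field F] [Fintype F]
    (hF : Fintype.card F = q ^ 2) (f : Polynomial F) (hf : f ≠ 0)
    (r : AlgebraicClosure F) (hr : r ≠ 0) (m : ℕ)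
    (hm : (f.map (algebraMap F (AlgebraicClosure F))).rootMultiplicity r = m) :
    ((∑ k ∈ Finset.range (f.natDegree + 1),
        Polynomial.C ((f.coeff (f.natDegree - k)) ^ q) * Polynomial.X ^ k).map
          (algebraMap F (AlgebraicClosure F))).rootMultiplicity (r ^ (-(q : ℤ))) = m :=
  stmt4_general q hq F hF f r hr m hm
end

section
/- Let F be a finite field of order q^2, let π be the permutation x ↦ x^{−q} of the nonzero elements of the algebraic closure of F, let r be a nonzero element of the algebraic closure, and let e = [F(r):F]. Then the orbit of r under the cyclic group generated by π has size e if e is odd and r^(q^e + 1) = 1, and has size 2e otherwise. -/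
open Polynomial IntermediateField

private lemma aux_pow_card_iff (F : Type) [Field F] [Fintype F]
    (r : AlgebraicClosure F) (k : ℕ) :
    r ^ (Fintype.card F) ^ k = r ↔ (minpoly F r).natDegree ∣ k := by
  classical
  set Q := Fintype.card F with hQdef
  have hQ2 : 1 < Q := Fintype.one_lt_card
  have hint : IsIntegral F r := Algebra.IsIntegral.isIntegral r
  set e := (minpoly F r).natDegree with hedef
  have hepos : 0 < e := minpoly.natDegree_pos hint
  haveI hfd : FiniteDimensional F F⟮r⟯ := IntermediateField.adjoin.finiteDimensional hint
  haveI : Finite ↥F⟮r⟯ := Module.finite_of_finite F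
  haveI : Fintype ↥F⟮r⟯ := Fintype.ofFinite _
  have hcard : Fintype.card ↥F⟮r⟯ = Q ^ e := by
    rw [Module.card_eq_pow_finrank (K := F) (V := ↥F⟮r⟯), IntermediateField.adjoin.finrank hint]
  have hbase : r ^ Q ^ e = r := by
    have h1 := FiniteField.pow_card (⟨r, IntermediateField.mem_adjoin_simple_self F r⟩ : ↥F⟮r⟯)
    rw [hcard] at h1
    have h2 := congrArg (Subtype.val) h1
    simpa using h2
  have hmul : ∀ s, r ^ Q ^ (e * s) = r := by
    intro s
    induction s with
    | zero => simp
    | succ n ih => rw [Nat.mul_succ, pow_add, pow_mul, ih, hbase]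
  constructor
  · intro hk
    by_contra hdvd
    have ht : r ^ Q ^ (k % e) = r := by
      rw [← Nat.div_add_mod k e, pow_add, pow_mul, hmul (k / e)] at hk
      exact hk
    set t := k % e with htdef
    have htpos : 0 < t := by
      rcases Nat.eq_zero_or_pos t with h0 | h
      · exact absurd (Nat.dvd_iff_mod_eq_zero.mpr h0) hdvd
      · exact h
    have htlt : t < e := Nat.mod_lt _ hepos
    -- the fixed points of the `Q^t`-power map form an intermediate field
    obtain ⟨p, hpC⟩ := CharP.exists F
    haveI : CharP F p := hpC
    have hpprime : p.Prime := CharP.char_is_prime F p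
    haveI : Fact p.Prime := ⟨hpprime⟩
    obtain ⟨n, -, hQp⟩ := FiniteField.card F p
    haveI : CharP (AlgebraicClosure F) p :=
      charP_of_injective_algebraMap (algebraMap F (AlgebraicClosure F)).injective p
    have hQp' : Q = p ^ (n : ℕ) := hQp
    have hNpow : Q ^ t = p ^ ((n : ℕ) * t) := by rw [hQp', ← pow_mul]
    have hN2 : 1 < Q ^ t := Nat.one_lt_pow htpos.ne' hQ2
    set N := Q ^ t with hNdef
    have hSf : ∀ x y : AlgebraicClosure F, x ^ N = x → y ^ N = y → (x + y) ^ N = x + y := by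
      intro x y hx hy
      rw [hNpow, add_pow_char_pow]
      rw [hNpow] at hx hy
      rw [hx, hy]
    let Sf : Subfield (AlgebraicClosure F) :=
    { carrier := {x | x ^ N = x}
      mul_mem' := by
        intro a b ha hb
        simp only [Set.mem_setOf_eq, mul_pow] at *
        rw [ha, hb]
      one_mem' := by simp
      add_mem' := by
        intro a b ha hb
        exact hSf a b ha hb
      zero_mem' := by
        simp only [Set.mem_setOf_eq]
        exact zero_pow (by omega)
      neg_mem' := by
        intro a ha
        simp only [Set.mem_setOf_eq] at *
        rw [neg_pow, hNpow, neg_one_pow_char_pow, ← hNpow, ha, neg_one_mul]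
      inv_mem' := by
        intro a ha
        simp only [Set.mem_setOf_eq] at *
        rw [inv_pow, ha] }
    let S : IntermediateField F (AlgebraicClosure F) :=
      Sf.toIntermediateField (fun x => by
        show algebraMap F (AlgebraicClosure F) x ^ N = algebraMap F (AlgebraicClosure F) x
        rw [← map_pow, FiniteField.pow_card_pow])
    have hrS : r ∈ S := ht
    have hle : F⟮r⟯ ≤ S := by
      rw [IntermediateField.adjoin_le_iff]
      exact Set.singleton_subset_iff.mpr hrS
    -- the root set of `X ^ N - X` is finite of size at most `N`
    set P : Polynomial (AlgebraicClosure F) := X ^ N - X with hPdef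
    have hP0 : P ≠ 0 := FiniteField.X_pow_card_sub_X_ne_zero _ hN2
    have hPdeg : P.natDegree = N := FiniteField.X_pow_card_sub_X_natDegree_eq _ hN2
    have hsub1 : (S : Set (AlgebraicClosure F)) ⊆ {x | P.IsRoot x} := by
      intro x hx
      have hx' : x ^ N = x := hx
      simp only [Set.mem_setOf_eq, IsRoot.def, hPdef, eval_sub, eval_pow, eval_X]
      rw [hx', sub_self]
    have hfin : {x | P.IsRoot x}.Finite := P.finite_setOf_isRoot hP0
    have hroots : {x | P.IsRoot x}.ncard ≤ N := by
      have h1 : {x | P.IsRoot x} ⊆ ↑P.roots.toFinset := by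
        intro x hx
        simp only [Finset.coe_sort_coe, Multiset.mem_toFinset, Finset.mem_coe]
        exact (mem_roots hP0).mpr hx
      calc {x | P.IsRoot x}.ncard ≤ (↑P.roots.toFinset : Set (AlgebraicClosure F)).ncard :=
            Set.ncard_le_ncard h1 (P.roots.toFinset : Finset _).finite_toSet
        _ = P.roots.toFinset.card := Set.ncard_coe_finset _
        _ ≤ Multiset.card P.roots := P.roots.toFinset_card_le
        _ ≤ P.natDegree := P.card_roots'
        _ = N := hPdeg
    have hcard2 : Q ^ e ≤ N := by
      calc Q ^ e = Fintype.card ↥F⟮r⟯ := hcard.symm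
        _ = Nat.card ↥F⟮r⟯ := (Nat.card_eq_fintype_card).symm
        _ = (F⟮r⟯ : Set (AlgebraicClosure F)).ncard := Nat.card_coe_set_eq _
        _ ≤ {x | P.IsRoot x}.ncard :=
            Set.ncard_le_ncard (fun x hx => hsub1 (hle hx)) hfin
        _ ≤ N := hroots
    have : N < Q ^ e := Nat.pow_lt_pow_right hQ2 htlt
    omega
  · rintro ⟨s, rfl⟩; exact hmul s



/-- Orbit sizes under the conjugate-reciprocal map `π(x) = x^{-q}`: for nonzero `r` in the
algebraic closure of `F` (of order `q^2`) with `e = [F(r):F]`, the `π`-orbit of `r` has size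
`e` if `e` is odd and `r` lies on the unit circle of `F(r)` (i.e. `r^(q^e+1) = 1`),
and size `2e` otherwise. -/
theorem stmt6 (q : ℕ) (hq : IsPrimePow q) (F : Type) [Field F] [Fintype F]
    (hF : Fintype.card F = q ^ 2) (r : AlgebraicClosure F) (hr : r ≠ 0)
    (e : ℕ) (he : (minpoly F r).natDegree = e) :
    ((Odd e ∧ r ^ (q ^ e + 1) = 1) →
      {x : AlgebraicClosure F |
        ∃ k : ℕ, (fun y : AlgebraicClosure F => (y ^ q)⁻¹)^[k] r = x}.ncard = e) ∧
    (¬ (Odd e ∧ r ^ (q ^ e + 1) = 1) →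
      {x : AlgebraicClosure F |
        ∃ k : ℕ, (fun y : AlgebraicClosure F => (y ^ q)⁻¹)^[k] r = x}.ncard = 2 * e) := by
  classical
  have hq2 : 2 ≤ q := hq.two_le
  set f : AlgebraicClosure F → AlgebraicClosure F := fun y => (y ^ q)⁻¹ with hf
  have hint : IsIntegral F r := Algebra.IsIntegral.isIntegral r
  have hepos : 0 < e := he ▸ minpoly.natDegree_pos hint
  have factA : ∀ k, r ^ q ^ (2 * k) = r ↔ e ∣ k := by
    intro k
    rw [pow_mul, ← hF, aux_pow_card_iff, he]
  have hiter : ∀ k, f^[k] r = if Even k then r ^ q ^ k else (r ^ q ^ k)⁻¹ := by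
    intro k
    induction k with
    | zero => simp
    | succ n ih =>
      rw [Function.iterate_succ_apply', ih]
      by_cases hn : Even n
      · rw [if_pos hn, if_neg (by simp [Nat.even_add_one, hn])]
        show ((r ^ q ^ n) ^ q)⁻¹ = (r ^ q ^ (n + 1))⁻¹
        rw [← pow_mul, pow_succ]
      · rw [if_neg hn, if_pos (Nat.even_add_one.mpr hn)]
        show (((r ^ q ^ n)⁻¹) ^ q)⁻¹ = r ^ q ^ (n + 1)
        rw [inv_pow, inv_inv, ← pow_mul, pow_succ]
  have hodd1 : ∀ k, Odd k → (f^[k] r = r ↔ r ^ (q ^ k + 1) = 1) := by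
    intro k hk
    rw [hiter k, if_neg (by simpa using Nat.not_even_iff_odd.mpr hk)]
    constructor
    · intro h
      rw [pow_add, pow_one]
      nth_rewrite 2 [← h]
      exact mul_inv_cancel₀ (pow_ne_zero _ hr)
    · intro h
      rw [pow_add, pow_one] at h
      exact inv_eq_of_mul_eq_one_right h
  have heven1 : ∀ k, f^[2 * k] r = r ↔ e ∣ k := by
    intro k
    rw [hiter, if_pos (even_two_mul k), factA k]
  have h2e : Function.IsPeriodicPt f (2 * e) r := (heven1 e).mpr dvd_rfl
  have hmpos : 0 < Function.minimalPeriod f r := h2e.minimalPeriod_pos (by omega)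
  set m := Function.minimalPeriod f r with hm
  have hPm : f^[m] r = r := Function.iterate_minimalPeriod
  have hoddm : Odd m → e ∣ m := by
    intro hmo
    have h1 : r ^ (q ^ m + 1) = 1 := (hodd1 m hmo).mp hPm
    have h2 : r ^ q ^ (2 * m) = r := by
      have hqm : 1 ≤ q ^ m := Nat.one_le_pow _ _ (by omega)
      have hsq : q ^ (2 * m) = q ^ m * q ^ m := by rw [two_mul, pow_add]
      have hid : q ^ (2 * m) = (q ^ m + 1) * (q ^ m - 1) + 1 := by
        obtain ⟨b, hb⟩ : ∃ b, q ^ m = b + 1 := ⟨q ^ m - 1, by omega⟩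
        rw [hsq, hb]
        simp only [Nat.add_sub_cancel]
        ring
      rw [hid, pow_add, pow_mul, h1, one_pow, one_mul, pow_one]
    exact (factA m).mp h2
  have hset : {x : AlgebraicClosure F | ∃ k : ℕ, f^[k] r = x}.ncard = m := by
    have hseteq : {x : AlgebraicClosure F | ∃ k : ℕ, f^[k] r = x}
        = (fun k => f^[k] r) '' ↑(Finset.range m) := by
      ext x
      simp only [Set.mem_setOf_eq, Set.mem_image, Finset.coe_range, Set.mem_Iio]
      constructor
      · rintro ⟨k, rfl⟩
        exact ⟨k % m, Nat.mod_lt _ hmpos, Function.iterate_mod_minimalPeriod_eq⟩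
      · rintro ⟨k, _, rfl⟩
        exact ⟨k, rfl⟩
    rw [hseteq, Set.ncard_image_of_injOn
        (by rw [Finset.coe_range]; exact Function.iterate_injOn_Iio_minimalPeriod),
      Set.ncard_coe_finset, Finset.card_range]
  constructor
  · rintro ⟨heodd, hcirc⟩
    rw [hset]
    have hPe : Function.IsPeriodicPt f e r := (hodd1 e heodd).mpr hcirc
    have hdvd : m ∣ e := hPe.minimalPeriod_dvd
    rcases Nat.even_or_odd m with hme | hmo
    · exfalso
      obtain ⟨j, hj⟩ := hme
      have hj2 : m = 2 * j := by omega
      have hej : e ∣ j := (heven1 j).mp (by rw [← hj2]; exact hPm)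
      have hjpos : 0 < j := by omega
      have h1 : e ≤ j := Nat.le_of_dvd hjpos hej
      have h2 : m ≤ e := Nat.le_of_dvd hepos hdvd
      omega
    · exact Nat.dvd_antisymm hdvd (hoddm hmo)
  · intro hnot
    rw [hset]
    have hdvd : m ∣ 2 * e := h2e.minimalPeriod_dvd
    rcases Nat.even_or_odd m with hme | hmo
    · obtain ⟨j, hj⟩ := hme
      have hj2 : m = 2 * j := by omega
      have hej : e ∣ j := (heven1 j).mp (by rw [← hj2]; exact hPm)
      have hje : j ∣ e := by
        have : 2 * j ∣ 2 * e := hj2 ▸ hdvd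
        exact (mul_dvd_mul_iff_left (two_ne_zero)).mp this
      rw [hj2, Nat.dvd_antisymm hje hej]
    · exfalso
      have hem : e ∣ m := hoddm hmo
      have hndvd : ¬ (2 ∣ m) := by
        have := Nat.odd_iff.mp hmo
        omega
      have hcop : Nat.Coprime m 2 :=
        Nat.coprime_comm.mp ((Nat.Prime.coprime_iff_not_dvd Nat.prime_two).mpr hndvd)
      have hm2 : m ∣ e := hcop.dvd_of_dvd_mul_left hdvd
      have hme' : m = e := Nat.dvd_antisymm hm2 hem
      refine hnot ⟨hme' ▸ hmo, ?_⟩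
      rw [← hme']
      exact (hodd1 m hmo).mp hPm
end

section
/- Let F be a finite field of order q^2 and R a finite subset of the nonzero elements of the algebraic closure of F that is closed under the map π(x) = x^{−q}. Then the sum S = Σ over unordered pairs {u,v} ⊆ R with u ≠ v of uv/(u−v)^2 lies in the subfield of order q. -/
/-!
The Frobenius `φ : x ↦ x ^ q` is a ring endomorphism of the algebraic closure, so it commutes
with the sum. It maps the term `uv / (u - v) ^ 2` of the pair `{u, v}` to the term of
`{φ u, φ v}`, which equals the term of `{π u, π v}` because `uv / (u - v) ^ 2` is unchanged
when `u` and `v` are both inverted. As `π` is injective and maps `R` into itself, it permutes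
`R`, hence permutes the pairs, and the sum is fixed by `φ`.
-/

open Finset

section PairWeight

variable {K L : Type*} [Field K] [Field L]

def pairWeight : Sym2 K → K :=
  Sym2.lift ⟨fun u v => u * v / (u - v) ^ 2, fun u v => by
    dsimp only
    rw [mul_comm, ← neg_sub, neg_sq]⟩

@[simp]
lemma pairWeight_mk (u v : K) : pairWeight s(u, v) = u * v / (u - v) ^ 2 := rfl

lemma pairWeight_eq_zero_of_isDiag {e : Sym2 K} (he : e.IsDiag) : pairWeight e = 0 := by
  induction e using Sym2.ind with
  | _ u v =>
    obtain rfl : u = v := Sym2.mk_isDiag_iff.1 he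
    simp

-- The junk value `0⁻¹ = 0` makes this hold without assuming `u, v ≠ 0`.
lemma pairWeight_map_inv (e : Sym2 K) : pairWeight (e.map (·⁻¹)) = pairWeight e := by
  induction e using Sym2.ind with
  | _ u v =>
    simp only [Sym2.map_mk, pairWeight_mk]
    rcases eq_or_ne u 0 with rfl | hu
    · simp
    rcases eq_or_ne v 0 with rfl | hv
    · simp
    rw [inv_sub_inv hu hv, div_pow, div_div_eq_mul_div, ← mul_inv, inv_mul_eq_div,
      ← neg_sub u v, neg_sq]
    field_simp

lemma map_pairWeight (φ : K →+* L) (e : Sym2 K) : φ (pairWeight e) = pairWeight (e.map φ) := by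
  induction e using Sym2.ind with
  | _ u v => simp

end PairWeight

lemma Finset.sum_sym2_map_of_injective_of_mapsTo {α M : Type*} [DecidableEq α]
    [AddCommMonoid M] {s : Finset α} {σ : α → α} (hσ : Function.Injective σ)
    (hmaps : ∀ a ∈ s, σ a ∈ s) (g : Sym2 α → M) :
    ∑ e ∈ s.sym2, g (e.map σ) = ∑ e ∈ s.sym2, g e := by
  have himage : s.image σ = s :=
    eq_of_subset_of_card_le (image_subset_iff.2 hmaps) (card_image_of_injective s hσ).ge
  rw [← sum_image fun x _ y _ h => Sym2.map.injective hσ h, ← sym2_image, himage]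

lemma map_sum_pairWeight_of_inv_mem {K : Type*} [Field K] (φ : K →+* K) {R : Finset K}
    (hclosed : ∀ u ∈ R, (φ u)⁻¹ ∈ R) :
    φ (∑ e ∈ R.sym2, pairWeight e) = ∑ e ∈ R.sym2, pairWeight e := by
  classical
  calc φ (∑ e ∈ R.sym2, pairWeight e)
      = ∑ e ∈ R.sym2, pairWeight ((e.map φ).map (·⁻¹)) := by
        simp only [map_sum, map_pairWeight, pairWeight_map_inv]
    _ = ∑ e ∈ R.sym2, pairWeight e := by
        simp only [Sym2.map_map]
        exact sum_sym2_map_of_injective_of_mapsTo (inv_injective.comp φ.injective) hclosed _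

lemma FiniteField.ringChar_eq_of_card_eq_pow {F : Type*} [Field F] [Fintype F] {p m : ℕ}
    [Fact p.Prime] (hm : m ≠ 0) (hcard : Fintype.card F = p ^ m) : ringChar F = p :=
  have hdvd : p ∣ ringChar F := (prime_dvd_char_iff_dvd_card p).2 (hcard ▸ dvd_pow_self p hm)
  ((Nat.prime_dvd_prime_iff_eq Fact.out (CharP.char_is_prime F _)).1 hdvd).symm

open scoped Classical in
/-- If `R` is a finite subset of the nonzero algebraic closure of `F` (of order `q^2`)
closed under `π(x) = x^{-q}`, then `S = Σ_{{u,v}⊆R, u≠v} uv/(u-v)^2` lies in the subfield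
of order `q`, i.e. `S^q = S`. -/
theorem stmt7 (q : ℕ) (hq : IsPrimePow q) (F : Type) [Field F] [Fintype F]
    (hF : Fintype.card F = q ^ 2) (R : Finset (AlgebraicClosure F))
    (hclosed : ∀ u ∈ R, (u ^ q)⁻¹ ∈ R) :
    (∑ e ∈ R.sym2.filter (fun e => ¬ e.IsDiag),
        Sym2.lift ⟨fun u v => u * v / (u - v) ^ 2, by
          intro a b
          show a * b / (a - b) ^ 2 = b * a / (b - a) ^ 2
          rw [mul_comm a b, show (a - b) ^ 2 = (b - a) ^ 2 from by ring]⟩ e) ^ q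
      = ∑ e ∈ R.sym2.filter (fun e => ¬ e.IsDiag),
          Sym2.lift ⟨fun u v => u * v / (u - v) ^ 2, by
            intro a b
            show a * b / (a - b) ^ 2 = b * a / (b - a) ^ 2
            rw [mul_comm a b, show (a - b) ^ 2 = (b - a) ^ 2 from by ring]⟩ e := by
  obtain ⟨p, k, hp, hk, rfl⟩ := hq
  have : Fact p.Prime := ⟨hp.nat_prime⟩
  have : CharP F p := ringChar.eq_iff.1 <|
    FiniteField.ringChar_eq_of_card_eq_pow (by positivity) (hF.trans (pow_mul p k 2).symm)
  change (∑ e ∈ R.sym2.filter _, pairWeight e) ^ p ^ k = ∑ e ∈ R.sym2.filter _, pairWeight e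
  have hdiag : ∀ e ∈ R.sym2, pairWeight e ≠ 0 → ¬ e.IsDiag :=
    fun _ _ hne hdiag => hne (pairWeight_eq_zero_of_isDiag hdiag)
  rw [sum_filter_of_ne hdiag]
  exact map_sum_pairWeight_of_inv_mem (iterateFrobenius _ p k) hclosed
end

section
/- Let F be a finite field of order q^2 and let Q, R be disjoint finite subsets of the nonzero elements of the algebraic closure of F, each closed under the map π(x) = x^{−q}. Then S = Σ_{(u,v) ∈ Q×R} uv/(u−v)^2 lies in the subfield of order q. -/
/-!
Raising to the `q`-th power is a ring endomorphism in characteristic `p` (as `q` is a power of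
`p`), so `S ^ q = Σ u^q v^q / (u^q - v^q)^2`. The summand `uv / (u - v)^2` is unchanged when both
arguments are inverted, so this is the same sum taken over `π(Q) × π(R)`; and `π`, being injective
and mapping the finite sets `Q` and `R` into themselves, permutes each of them.
-/

open Function

theorem Finset.sum_comp_of_injective_of_mapsTo {α M : Type*} [AddCommMonoid M] {s : Finset α}
    {g : α → α} (hg : Injective g) (hs : ∀ a ∈ s, g a ∈ s) (f : α → M) :
    ∑ a ∈ s, f (g a) = ∑ a ∈ s, f a :=
  sum_nbij g hs hg.injOn ((s.finite_toSet.injOn_iff_bijOn_of_mapsTo hs).mp hg.injOn).surjOn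
    fun _ _ ↦ rfl

/-- Holds for all `a` and `b`: when `a = 0`, `b = 0` or `a = b` both sides are `0` (`x / 0 = 0`). -/
theorem mul_div_sub_sq_inv_inv {K : Type*} [Field K] (a b : K) :
    a⁻¹ * b⁻¹ / (a⁻¹ - b⁻¹) ^ 2 = a * b / (a - b) ^ 2 := by
  rcases eq_or_ne a 0 with rfl | ha
  · simp
  rcases eq_or_ne b 0 with rfl | hb
  · simp
  rcases eq_or_ne a b with rfl | hab
  · simp
  have hab' : a - b ≠ 0 := sub_ne_zero.mpr hab
  rw [inv_sub_inv ha hb]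
  field_simp
  ring

theorem sum_mul_div_sub_sq_pow_expChar_pow {K : Type*} [Field K] (p k : ℕ) [ExpChar K p]
    (Q R : Finset K) (hQ : ∀ u ∈ Q, (u ^ p ^ k)⁻¹ ∈ Q) (hR : ∀ u ∈ R, (u ^ p ^ k)⁻¹ ∈ R) :
    (∑ u ∈ Q, ∑ v ∈ R, u * v / (u - v) ^ 2) ^ p ^ k
      = ∑ u ∈ Q, ∑ v ∈ R, u * v / (u - v) ^ 2 := by
  have hπ : Injective fun u : K ↦ (u ^ p ^ k)⁻¹ :=
    inv_injective.comp (iterateFrobenius K p k).injective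
  calc (∑ u ∈ Q, ∑ v ∈ R, u * v / (u - v) ^ 2) ^ p ^ k
      = ∑ u ∈ Q, ∑ v ∈ R, u ^ p ^ k * v ^ p ^ k / (u ^ p ^ k - v ^ p ^ k) ^ 2 := by
        simp only [← iterateFrobenius_def, map_sum, map_div₀, map_mul, map_pow, map_sub]
    _ = ∑ u ∈ Q, ∑ v ∈ R,
          (u ^ p ^ k)⁻¹ * (v ^ p ^ k)⁻¹ / ((u ^ p ^ k)⁻¹ - (v ^ p ^ k)⁻¹) ^ 2 := by
        simp only [mul_div_sub_sq_inv_inv]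
    _ = ∑ u ∈ Q, ∑ v ∈ R, (u ^ p ^ k)⁻¹ * v / ((u ^ p ^ k)⁻¹ - v) ^ 2 :=
        Finset.sum_congr rfl fun u _ ↦ R.sum_comp_of_injective_of_mapsTo hπ hR
          fun v ↦ (u ^ p ^ k)⁻¹ * v / ((u ^ p ^ k)⁻¹ - v) ^ 2
    _ = ∑ u ∈ Q, ∑ v ∈ R, u * v / (u - v) ^ 2 :=
        Q.sum_comp_of_injective_of_mapsTo hπ hQ fun u ↦ ∑ v ∈ R, u * v / (u - v) ^ 2

theorem stmt8_general (q : ℕ) (hq : IsPrimePow q) (F : Type) [Field F] [Fintype F]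
    (hF : Fintype.card F = q ^ 2) (Q R : Finset (AlgebraicClosure F))
    (hQ : ∀ u ∈ Q, (u ^ q)⁻¹ ∈ Q) (hR : ∀ u ∈ R, (u ^ q)⁻¹ ∈ R) :
    (∑ u ∈ Q, ∑ v ∈ R, u * v / (u - v) ^ 2) ^ q
      = ∑ u ∈ Q, ∑ v ∈ R, u * v / (u - v) ^ 2 := by
  obtain ⟨p, k, hp, -, rfl⟩ := hq
  have : Fact p.Prime := ⟨hp.nat_prime⟩
  have : CharP F p := charP_of_card_eq_prime_pow (hF.trans (pow_mul p k 2).symm)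
  have : CharP (AlgebraicClosure F) p :=
    charP_of_injective_algebraMap (algebraMap F (AlgebraicClosure F)).injective p
  exact sum_mul_div_sub_sq_pow_expChar_pow p k Q R hQ hR

/-- If `Q` and `R` are disjoint finite subsets of the nonzero algebraic closure of `F`
(of order `q^2`), each closed under `π(x) = x^{-q}`, then
`S = Σ_{(u,v)∈Q×R} uv/(u-v)^2` satisfies `S^q = S`, i.e. lies in the subfield of order `q`. -/
theorem stmt8 (q : ℕ) (hq : IsPrimePow q) (F : Type) [Field F] [Fintype F]
    (hF : Fintype.card F = q ^ 2) (Q R : Finset (AlgebraicClosure F))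
    (h0Q : (0 : AlgebraicClosure F) ∉ Q) (h0R : (0 : AlgebraicClosure F) ∉ R)
    (hdisj : Disjoint Q R)
    (hQ : ∀ u ∈ Q, (u ^ q)⁻¹ ∈ Q) (hR : ∀ u ∈ R, (u ^ q)⁻¹ ∈ R) :
    (∑ u ∈ Q, ∑ v ∈ R, u * v / (u - v) ^ 2) ^ q
      = ∑ u ∈ Q, ∑ v ∈ R, u * v / (u - v) ^ 2 :=
  stmt8_general q hq F hF Q R hQ hR
end

section
/- Let F be a finite field of order q^2 with q a power of 2, let π(x) = x^{−q}, and let r be a nonzero element of the algebraic closure of F with π-orbit P of size n. Then the sum S = Σ over unordered pairs {u,v} ⊆ P, u ≠ v, of uv/(u−v)^2 lies in the subfield H of order q, and its absolute trace Tr_{H/F_2}(S) is congruent to binom(n−1, 2) modulo 2. -/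
/-!
Write the orbit as `u₀, …, u_{n-1}` with `u_{i+1} = u_i^{-q}` and `u_n = u₀`, and put
`T = ∑_{i<j} u_i / (u_i - u_j)`. Since `uv/(u-v)² = t² - t` for `t = u/(u-v)`, in
characteristic 2 we get `S = T² + T`. The Frobenius `x ↦ x^q` sends `u_i/(u_i - u_j)` to
`u_{j+1}/(u_{j+1} - u_{i+1})`, which is `1 + u_{i+1}/(u_{i+1} - u_{j+1})` except when
`j = n - 1`, where the pair wraps around to `(0, i + 1)` already in increasing order.
Hence `T^q = T + c` with `c = binom(n-1, 2)`. As `c² = c`, this gives `S^q = S`, and the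
trace telescopes: `∑_{i<m} (T² + T)^(2^i) = T^q + T = c`.
-/

open Finset Function

theorem Function.Injective.mem_periodicPts_of_forall_iterate_mem {α : Type*} {f : α → α}
    (hf : Injective f) {s : Set α} (hs : s.Finite) {x : α} (hx : ∀ k, f^[k] x ∈ s) :
    x ∈ periodicPts f := by
  obtain ⟨a, b, hab, heq⟩ := hs.exists_lt_map_eq_of_forall_mem hx
  refine ⟨b - a, by omega, (hf.iterate a).eq_iff.mp ?_⟩
  rw [← iterate_add_apply, Nat.add_sub_cancel' hab.le, heq]

theorem Function.eq_image_range_minimalPeriod {α : Type*} [DecidableEq α] {f : α → α} {x : α}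
    (hx : x ∈ periodicPts f) {P : Finset α} (hP : ∀ y, y ∈ P ↔ ∃ k, f^[k] x = y) :
    P = (range (minimalPeriod f x)).image (f^[·] x) := by
  ext y
  simp only [mem_image, mem_range, hP]
  constructor
  · rintro ⟨k, rfl⟩
    exact ⟨k % _, Nat.mod_lt _ (minimalPeriod_pos_of_mem_periodicPts hx),
      iterate_mod_minimalPeriod_eq⟩
  · rintro ⟨k, -, rfl⟩
    exact ⟨k, rfl⟩

theorem Function.card_image_range_minimalPeriod {α : Type*} [DecidableEq α] (f : α → α)
    (x : α) :
    ((range (minimalPeriod f x)).image (f^[·] x)).card = minimalPeriod f x := by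
  rw [card_image_of_injOn (by simpa using iterate_injOn_Iio_minimalPeriod), card_range]

theorem Set.InjOn.sym2_map {α β : Type*} {u : α → β} {s : Finset α} (hu : Set.InjOn u s) :
    Set.InjOn (Sym2.map u) s.sym2 := by
  rintro ⟨a, b⟩ hab ⟨c, d⟩ hcd h
  simp only [coe_sym2, mk_mem_sym2_iff] at hab hcd
  simp only [Sym2.map_mk, Sym2.eq_iff] at h ⊢
  rcases h with ⟨h1, h2⟩ | ⟨h1, h2⟩
  · exact .inl ⟨hu hab.1 hcd.1 h1, hu hab.2 hcd.2 h2⟩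
  · exact .inr ⟨hu hab.1 hcd.2 h1, hu hab.2 hcd.1 h2⟩

theorem Finset.sum_sym2_image_filter_not_isDiag {α β M : Type*} [DecidableEq α] [DecidableEq β]
    [AddCommMonoid M] {u : α → β} {s : Finset α} (hu : Set.InjOn u s) (f : Sym2 β → M) :
    ∑ e ∈ (s.image u).sym2 with ¬ e.IsDiag, f e
      = ∑ e ∈ s.sym2 with ¬ e.IsDiag, f (e.map u) := by
  rw [sum_filter, sym2_image, sum_image hu.sym2_map, sum_filter]
  refine sum_congr rfl fun e he => ?_
  induction e using Sym2.ind with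
  | _ a b =>
    rw [mem_sym2_iff] at he
    simp only [Sym2.map_mk, Sym2.mk_isDiag_iff, hu.eq_iff (he a (by simp)) (he b (by simp))]

theorem Finset.sum_sym2_range_filter_not_isDiag {M : Type*} [AddCommMonoid M] (n : ℕ)
    (f : Sym2 ℕ → M) :
    ∑ e ∈ (range n).sym2 with ¬ e.IsDiag, f e
      = ∑ j ∈ range n, ∑ i ∈ range j, f s(i, j) := by
  rw [sum_sym2_filter_not_isDiag]
  exact sum_finset_product_right' (f := fun i j => f s(i, j)) _ _ _ fun p => by
    simp only [mem_filter, mem_offDiag, mem_range]; omega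

section Field

variable {K : Type*} [Field K]

theorem div_sub_add_div_sub {a b : K} (h : a ≠ b) : a / (a - b) + b / (b - a) = 1 := by
  rw [← neg_sub a b, div_neg, ← sub_eq_add_neg, ← sub_div, div_self (sub_ne_zero.2 h)]

theorem div_sub_eq_inv_div_inv_sub {a b : K} (ha : a ≠ 0) (hb : b ≠ 0) :
    a / (a - b) = b⁻¹ / (b⁻¹ - a⁻¹) := by
  rw [inv_sub_inv hb ha, div_div_eq_mul_div, inv_mul_eq_div, mul_div_cancel_left₀ a hb]

theorem div_sub_pow_expChar_pow (p : ℕ) [ExpChar K p] (n : ℕ) {a b : K} (ha : a ≠ 0)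
    (hb : b ≠ 0) :
    (a / (a - b)) ^ p ^ n = (b ^ p ^ n)⁻¹ / ((b ^ p ^ n)⁻¹ - (a ^ p ^ n)⁻¹) := by
  rw [div_pow, sub_pow_expChar_pow,
    div_sub_eq_inv_div_inv_sub (pow_ne_zero _ ha) (pow_ne_zero _ hb)]

theorem mul_div_sub_sq_eq_div_sub_sq_sub {a b : K} (h : a ≠ b) :
    a * b / (a - b) ^ 2 = (a / (a - b)) ^ 2 - a / (a - b) := by
  have := sub_ne_zero.2 h
  field_simp
  ring

def orbitRatioSum (u : ℕ → K) (n : ℕ) : K :=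
  ∑ j ∈ range n, ∑ i ∈ range j, u i / (u i - u j)

variable [CharP K 2]

theorem sum_mul_div_sub_sq_eq_orbitRatioSum {u : ℕ → K} {n : ℕ}
    (hu : Set.InjOn u (Set.Iio n)) :
    ∑ j ∈ range n, ∑ i ∈ range j, u i * u j / (u i - u j) ^ 2
      = orbitRatioSum u n ^ 2 + orbitRatioSum u n := by
  simp only [orbitRatioSum, sum_pow_char (p := 2), ← sum_add_distrib]
  refine sum_congr rfl fun j hj => sum_congr rfl fun i hi => ?_
  simp only [mem_range] at hi hj
  rw [mul_div_sub_sq_eq_div_sub_sq_sub (hu.ne (by simp; omega) (by simpa) (by omega)),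
    CharTwo.sub_eq_add]

theorem orbitRatioSum_pow_two_pow {m k : ℕ} {u : ℕ → K} (hu : ∀ i, u i ≠ 0)
    (hsucc : ∀ i, u (i + 1) = (u i ^ 2 ^ m)⁻¹) (hper : u (k + 1) = u 0)
    (hinj : Set.InjOn u (Set.Iio (k + 1))) :
    orbitRatioSum u (k + 1) ^ 2 ^ m = orbitRatioSum u (k + 1) + k.choose 2 := by
  set t : ℕ → ℕ → K := fun i j => u i / (u i - u j)
  have hfrob : ∀ i j, t i j ^ 2 ^ m = t (j + 1) (i + 1) := fun i j => by
    simp only [t, hsucc]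
    exact div_sub_pow_expChar_pow 2 m (hu i) (hu j)
  have hflip : ∀ j < k, ∀ i < j, t (j + 1) (i + 1) = 1 + t (i + 1) (j + 1) := by
    intro j hj i hi
    have hne : u (j + 1) ≠ u (i + 1) := hinj.ne (by simp; omega) (by simp; omega) (by omega)
    exact CharTwo.add_eq_iff_eq_add.mp (div_sub_add_div_sub hne)
  have hcount : ∑ j ∈ range k, ∑ i ∈ range j, (1 : K) = k.choose 2 := by
    simp only [sum_const, card_range, nsmul_one]
    rw [← Nat.cast_sum, sum_range_id, Nat.choose_two_right]
  calc orbitRatioSum u (k + 1) ^ 2 ^ m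
      = ∑ j ∈ range (k + 1), ∑ i ∈ range j, t (j + 1) (i + 1) := by
        simp only [orbitRatioSum, sum_pow_char_pow]
        exact sum_congr rfl fun j _ => sum_congr rfl fun i _ => hfrob i j
    _ = ∑ j ∈ range k, ∑ i ∈ range j, (1 + t (i + 1) (j + 1))
          + ∑ i ∈ range k, t 0 (i + 1) := by
        rw [sum_range_succ]
        congr 1
        · exact sum_congr rfl fun j hj => sum_congr rfl fun i hi =>
            hflip j (mem_range.1 hj) i (mem_range.1 hi)
        · simp only [t, hper]
    _ = orbitRatioSum u (k + 1) + k.choose 2 := by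
        simp only [orbitRatioSum, sum_range_succ', sum_add_distrib, hcount, range_zero,
          sum_empty, add_zero]
        ring

end Field

section CharTwo

variable {R : Type*} [CommRing R] [CharP R 2]

theorem natCast_sq_add_self (n : ℕ) : (n : R) ^ 2 + n = 0 := by
  have h : ((n * (n + 1) : ℕ) : R) = 0 :=
    (CharP.cast_eq_zero_iff R 2 _).2 (Nat.even_mul_succ_self n).two_dvd
  push_cast at h
  linear_combination h

theorem sum_range_sq_add_self_pow_two_pow (x : R) (m : ℕ) :
    ∑ i ∈ range m, (x ^ 2 + x) ^ 2 ^ i = x ^ 2 ^ m + x := by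
  induction m with
  | zero => simp [CharTwo.add_self_eq_zero]
  | succ m ih =>
    rw [sum_range_succ, ih, add_pow_char_pow, ← pow_mul, ← pow_succ']
    linear_combination x ^ 2 ^ m * CharTwo.two_eq_zero (R := R)

theorem sq_add_self_pow_two_pow_of_pow_two_pow_eq {x c : R} {m : ℕ}
    (hx : x ^ 2 ^ m = x + c) (hc : c ^ 2 + c = 0) : (x ^ 2 + x) ^ 2 ^ m = x ^ 2 + x := by
  rw [add_pow_char_pow, ← pow_mul, mul_comm, pow_mul, hx]
  linear_combination hc + x * c * CharTwo.two_eq_zero (R := R)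

end CharTwo

open scoped Classical in
/-- For `F` of order `q^2`, `q = 2^m`, and `P` the `π`-orbit (under `π(x) = x^{-q}`) of a
nonzero `r` in the algebraic closure, of size `n`, the sum
`S = Σ_{{u,v}⊆P, u≠v} uv/(u-v)^2` lies in the half field `H` of order `q` (`S^q = S`) and its
absolute trace `Tr_{H/F_2}(S) = S + S^2 + ⋯ + S^(q/2)` equals `binom(n-1,2) mod 2`. -/
theorem stmt9 (m q : ℕ) (hq : q = 2 ^ m)
    (F : Type) [Field F] [Fintype F] (hF : Fintype.card F = q ^ 2)
    (r : AlgebraicClosure F) (hr : r ≠ 0)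
    (P : Finset (AlgebraicClosure F))
    (hP : ∀ x, x ∈ P ↔ ∃ k : ℕ, (fun y : AlgebraicClosure F => (y ^ q)⁻¹)^[k] r = x)
    (n : ℕ) (hn : P.card = n) :
    let S : AlgebraicClosure F :=
      ∑ e ∈ P.sym2.filter (fun e => ¬ e.IsDiag),
        Sym2.lift ⟨fun u v => u * v / (u - v) ^ 2, by
          intro a b
          show a * b / (a - b) ^ 2 = b * a / (b - a) ^ 2
          rw [mul_comm a b, show (a - b) ^ 2 = (b - a) ^ 2 from by ring]⟩ e
    S ^ q = S ∧
      ∑ i ∈ Finset.range m, S ^ 2 ^ i = (((n - 1).choose 2 : ℕ) : AlgebraicClosure F) := by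
  subst hq
  intro S
  have : CharP F 2 := charP_of_card_eq_prime_pow (f := m * 2) (by rw [hF, pow_mul])
  set g : AlgebraicClosure F → AlgebraicClosure F := fun y => (y ^ 2 ^ m)⁻¹
  have hg : Injective g := inv_injective.comp (iterateFrobenius_inj _ 2 m)
  have hper : r ∈ periodicPts g :=
    hg.mem_periodicPts_of_forall_iterate_mem P.finite_toSet fun k => (hP _).2 ⟨k, rfl⟩
  have hPim := eq_image_range_minimalPeriod hper hP
  obtain ⟨k, hk⟩ : ∃ k, minimalPeriod g r = k + 1 :=
    Nat.exists_eq_add_one.2 (minimalPeriod_pos_of_mem_periodicPts hper)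
  have hnk : n - 1 = k := by rw [← hn, hPim, card_image_range_minimalPeriod, hk]; rfl
  set u : ℕ → AlgebraicClosure F := (g^[·] r)
  have hinj : Set.InjOn u (Set.Iio (k + 1)) := hk ▸ iterate_injOn_Iio_minimalPeriod
  have hS : S = orbitRatioSum u (k + 1) ^ 2 + orbitRatioSum u (k + 1) := by
    rw [← sum_mul_div_sub_sq_eq_orbitRatioSum hinj, ← hk]
    simp only [S, hPim]
    rw [sum_sym2_image_filter_not_isDiag (by simpa using hk ▸ hinj),
      sum_sym2_range_filter_not_isDiag]
    simp only [Sym2.map_mk, Sym2.lift_mk]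
  have hu0 : ∀ i, u i ≠ 0 := fun i h =>
    hr (hg.iterate i (h.trans (iterate_fixed (by simp [g]) i).symm))
  have hT : orbitRatioSum u (k + 1) ^ 2 ^ m = orbitRatioSum u (k + 1) + k.choose 2 :=
    orbitRatioSum_pow_two_pow hu0 (fun i => iterate_succ_apply' g i r)
      (hk ▸ iterate_minimalPeriod) hinj
  rw [hnk, hS]
  refine ⟨sq_add_self_pow_two_pow_of_pow_two_pow_eq hT (natCast_sq_add_self _), ?_⟩
  rw [sum_range_sq_add_self_pow_two_pow, hT, add_right_comm, CharTwo.add_self_eq_zero, zero_add]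
end

section
/- Let F be a finite field of order q^2 with q a power of 2, and let R be a finite subset of the nonzero algebraic closure of F which is the union of t distinct orbits under π(x) = x^{−q}. Then S = Σ over unordered pairs {u,v} ⊆ R, u ≠ v, of uv/(u−v)^2 lies in the subfield H of order q, and Tr_{H/F_2}(S) ≡ binom(|R|+1, 2) + t (mod 2). -/
/-!
With `ratio u v = u / (u - v)` one has `uv / (u - v)^2 = ratio u v ^ 2 - ratio u v`, so in
characteristic 2 the trace of a term telescopes to `ratio u v ^ q - ratio u v`, and
`ratio u v ^ q = 1 + ratio (π u) (π v)`. Hence `Tr S = C(|R|, 2) + Σ ratioChange π {u, v}` with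
`ratioChange π {u, v} = ratio (π u) (π v) + ratio u v`, a sum that only records how `π` reorders
the pairs: across two disjoint `π`-stable sets it cancels, and on one orbit of length `ℓ` exactly
the `ℓ - 1` pairs through the last point of the cycle change orientation. Summing over the orbits
gives `|R| + t`, and `C(|R|, 2) + |R| = C(|R| + 1, 2)`. Finally `S^q = S` because the `q`-th power
of the term of `{u, v}` is the term of `{π u, π v}`, and `π` permutes the pairs of `R`.
-/

open Finset Function

namespace Finset

variable {α : Type*} [DecidableEq α] {M : Type*} [AddCommMonoid M]

theorem card_sym2_filter_not_isDiag (s : Finset α) :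
    #{e ∈ s.sym2 | ¬ e.IsDiag} = (#s).choose 2 := by
  rw [sym2_eq_image, Sym2.filter_image_mk_not_isDiag, Sym2.card_image_offDiag]

theorem sum_sym2_filter_not_isDiag_congr {s : Finset α} {g h : Sym2 α → M}
    (hgh : ∀ a ∈ s, ∀ b ∈ s, a ≠ b → g s(a, b) = h s(a, b)) :
    ∑ e ∈ s.sym2 with ¬ e.IsDiag, g e = ∑ e ∈ s.sym2 with ¬ e.IsDiag, h e := by
  refine sum_congr rfl fun e he => ?_
  induction e using Sym2.ind with
  | _ a b =>
    simp only [mem_filter, mk_mem_sym2_iff, Sym2.mk_isDiag_iff] at he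
    exact hgh a he.1.1 b he.1.2 he.2

theorem sum_sym2_filter_not_isDiag_insert {s : Finset α} {a : α} (ha : a ∉ s)
    (g : Sym2 α → M) :
    ∑ e ∈ (insert a s).sym2 with ¬ e.IsDiag, g e
      = ∑ e ∈ s.sym2 with ¬ e.IsDiag, g e + ∑ b ∈ s, g s(a, b) := by
  have hpairs : {e ∈ (insert a s).sym2 | ¬ e.IsDiag}
      = s.image (fun b => s(a, b)) ∪ {e ∈ s.sym2 | ¬ e.IsDiag} := by
    ext e
    induction e using Sym2.ind with
    | _ x y =>
      simp only [mem_filter, mk_mem_sym2_iff, mem_insert, Sym2.mk_isDiag_iff, mem_union,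
        mem_image, Sym2.eq_iff]
      grind
  rw [hpairs, sum_union, sum_image, add_comm]
  · intro b hb c _ h
    obtain h | ⟨rfl, rfl⟩ := Sym2.eq_iff.mp h
    · exact h.2
    · exact absurd hb ha
  · rw [disjoint_left]
    simp only [mem_image, mem_filter, not_and]
    rintro _ ⟨b, -, rfl⟩ hab
    exact absurd (mk_mem_sym2_iff.mp hab).1 ha

theorem sum_sym2_filter_not_isDiag_union {s t : Finset α} (hst : Disjoint s t)
    (g : Sym2 α → M) :
    ∑ e ∈ (s ∪ t).sym2 with ¬ e.IsDiag, g e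
      = ∑ e ∈ s.sym2 with ¬ e.IsDiag, g e + ∑ e ∈ t.sym2 with ¬ e.IsDiag, g e
        + ∑ a ∈ s, ∑ b ∈ t, g s(a, b) := by
  induction t using Finset.induction_on with
  | empty => simp
  | insert b t hb ih =>
    rw [disjoint_insert_right] at hst
    rw [union_insert, sum_sym2_filter_not_isDiag_insert (by simp [hst.1, hb]),
      sum_sym2_filter_not_isDiag_insert hb, ih hst.2, sum_union hst.2]
    simp only [sum_insert hb, sum_add_distrib, Sym2.eq_swap (a := b)]
    abel

theorem sum_sym2_filter_not_isDiag_image_range {f : ℕ → α} {n : ℕ}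
    (hf : Set.InjOn f (Set.Iio n)) (g : Sym2 α → M) :
    ∑ e ∈ ((range n).image f).sym2 with ¬ e.IsDiag, g e
      = ∑ j ∈ range n, ∑ i ∈ range j, g s(f i, f j) := by
  induction n with
  | zero => simp
  | succ n ih =>
    have hn : f n ∉ (range n).image f := by
      simp only [mem_image, mem_range, not_exists, not_and]
      exact fun i hi h => hi.ne (hf (Nat.lt_succ_of_lt hi) n.lt_succ_self h)
    have hf' : Set.InjOn f (range n) := hf.mono (by simp)
    rw [range_add_one, image_insert, sum_sym2_filter_not_isDiag_insert hn, sum_insert (by simp),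
      ih (hf.mono fun i hi => Nat.lt_succ_of_lt hi), sum_image hf']
    simp only [Sym2.eq_swap (a := f n)]
    exact add_comm _ _

theorem sum_sym2_filter_not_isDiag_map {s : Finset α} {f : α → α} (hf : Injective f)
    (hs : s.image f = s) (g : Sym2 α → M) :
    ∑ e ∈ s.sym2 with ¬ e.IsDiag, g (e.map f) = ∑ e ∈ s.sym2 with ¬ e.IsDiag, g e := by
  rw [← sum_image (f := g) (g := Sym2.map f) fun _ _ _ _ h => Sym2.map.injective hf h]
  congr 1
  conv_rhs => rw [← hs, sym2_image, filter_image]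
  simp only [Sym2.isDiag_map hf]

theorem sum_comp_of_image_eq {s : Finset α} {f : α → α} (hf : Set.InjOn f s)
    (hs : s.image f = s) (h : α → M) : ∑ x ∈ s, h (f x) = ∑ x ∈ s, h x := by
  conv_rhs => rw [← hs]
  exact (sum_image hf).symm

theorem image_biUnion_id_eq {Os : Finset (Finset α)} {f : α → α}
    (hOs : ∀ P ∈ Os, P.image f = P) : (Os.biUnion id).image f = Os.biUnion id := by
  rw [biUnion_image]
  exact biUnion_congr rfl hOs

-- Both sides are `∑ i < j ≤ n, W i j`, with the terms `i = 0`, resp. `j = n`, split off.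
theorem sum_range_sum_range_shift (W : ℕ → ℕ → M) (n : ℕ) :
    ∑ j ∈ range n, ∑ i ∈ range j, W (i + 1) (j + 1) + ∑ j ∈ range n, W 0 (j + 1)
      = ∑ j ∈ range n, ∑ i ∈ range j, W i j + ∑ i ∈ range n, W i n := by
  induction n with
  | zero => simp
  | succ n ih =>
    rw [sum_range_succ _ n, sum_range_succ _ n,
      sum_range_succ (fun j => ∑ i ∈ range j, W i j) n, ← add_assoc, ← ih, sum_range_succ' (fun i => W i (n + 1))]
    abel

end Finset

section Ratio

variable {K : Type*} [Field K]

def ratio (u v : K) : K := u / (u - v)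

@[simp]
theorem ratio_self (u : K) : ratio u u = 0 := by
  simp [ratio]

theorem ratio_add_ratio_swap {u v : K} (h : u ≠ v) : ratio u v + ratio v u = 1 := by
  have h' : v - u = -(u - v) := by ring
  rw [ratio, ratio, h', div_neg, ← sub_eq_add_neg, ← sub_div, div_self (sub_ne_zero.mpr h)]

theorem ratio_inv_inv {u v : K} (hu : u ≠ 0) (hv : v ≠ 0) :
    ratio u⁻¹ v⁻¹ = ratio v u := by
  rw [ratio, ratio, inv_sub_inv hu hv, div_div_eq_mul_div, inv_mul_eq_div]
  field_simp

theorem mul_div_sub_sq_eq_ratio (u v : K) : u * v / (u - v) ^ 2 = ratio u v ^ 2 - ratio u v := by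
  rcases eq_or_ne u v with rfl | h
  · simp
  · have := sub_ne_zero.mpr h
    rw [ratio]
    field_simp
    ring

theorem ratio_pow_expChar_pow (p : ℕ) [ExpChar K p] (n : ℕ) (u v : K) :
    ratio u v ^ p ^ n = ratio (u ^ p ^ n) (v ^ p ^ n) := by
  rw [ratio, ratio, div_pow, sub_pow_expChar_pow]

end Ratio

theorem sum_range_pow_sub_self_pow {R : Type*} [CommRing R] (p : ℕ) [ExpChar R p] (x : R)
    (m : ℕ) : ∑ i ∈ range m, (x ^ p - x) ^ p ^ i = x ^ p ^ m - x := by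
  have hstep (i : ℕ) : (x ^ p - x) ^ p ^ i = x ^ p ^ (i + 1) - x ^ p ^ i := by
    rw [sub_pow_expChar_pow, ← pow_mul, ← pow_succ']
  simp only [hstep, sum_range_sub (fun i => x ^ p ^ i), pow_zero, pow_one]

section InvPow

variable {K : Type*} [Field K]

def invPow (q : ℕ) (x : K) : K := (x ^ q)⁻¹

theorem mapsTo_invPow_ne_zero (q : ℕ) : Set.MapsTo (invPow q) {x : K | x ≠ 0} {x | x ≠ 0} :=
  fun _ hx => inv_ne_zero (pow_ne_zero q hx)

variable (K) in
def invPowEmbedding (p : ℕ) [ExpChar K p] (n : ℕ) : K ↪ K :=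
  ⟨invPow (p ^ n), fun _ _ h => iterateFrobenius_inj K p n (inv_injective h)⟩

@[simp]
theorem invPowEmbedding_apply (p : ℕ) [ExpChar K p] (n : ℕ) (x : K) :
    invPowEmbedding K p n x = (x ^ p ^ n)⁻¹ := rfl

end InvPow

section RatioChange

variable {K : Type*} [Field K] [CharP K 2] (σ : K ↪ K)

def ratioChange : Sym2 K → K :=
  Sym2.lift ⟨fun a b => ratio (σ a) (σ b) + ratio a b, fun a b => by
    rcases eq_or_ne a b with rfl | h
    · rfl
    · linear_combination ratio_add_ratio_swap h + ratio_add_ratio_swap (σ.injective.ne h)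
        + (1 - ratio b a - ratio (σ b) (σ a)) * CharTwo.two_eq_zero (R := K)⟩

@[simp]
theorem ratioChange_mk (a b : K) : ratioChange σ s(a, b) = ratio (σ a) (σ b) + ratio a b := rfl

variable {σ} [DecidableEq K]

theorem sum_sum_ratioChange_eq_zero {s t : Finset K} (hs : s.image σ = s) (ht : t.image σ = t) :
    ∑ a ∈ s, ∑ b ∈ t, ratioChange σ s(a, b) = 0 := by
  have hshift :
      ∑ a ∈ s, ∑ b ∈ t, ratio (σ a) (σ b) = ∑ a ∈ s, ∑ b ∈ t, ratio a b := by
    rw [← sum_comp_of_image_eq σ.injective.injOn hs fun a => ∑ b ∈ t, ratio a b]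
    exact sum_congr rfl fun a _ => sum_comp_of_image_eq σ.injective.injOn ht (ratio (σ a))
  simp only [ratioChange_mk, sum_add_distrib, hshift, CharTwo.add_self_eq_zero]

theorem sum_ratioChange_union {s t : Finset K} (hst : Disjoint s t) (hs : s.image σ = s)
    (ht : t.image σ = t) :
    ∑ e ∈ (s ∪ t).sym2 with ¬ e.IsDiag, ratioChange σ e
      = ∑ e ∈ s.sym2 with ¬ e.IsDiag, ratioChange σ e
        + ∑ e ∈ t.sym2 with ¬ e.IsDiag, ratioChange σ e := by
  rw [sum_sym2_filter_not_isDiag_union hst, sum_sum_ratioChange_eq_zero hs ht, add_zero]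

theorem sum_ratioChange_biUnion {Os : Finset (Finset K)}
    (hdisj : (Os : Set (Finset K)).PairwiseDisjoint id) (hOs : ∀ P ∈ Os, P.image σ = P) :
    ∑ e ∈ (Os.biUnion id).sym2 with ¬ e.IsDiag, ratioChange σ e
      = ∑ P ∈ Os, ∑ e ∈ P.sym2 with ¬ e.IsDiag, ratioChange σ e := by
  induction Os using Finset.induction_on with
  | empty => simp
  | insert P Os hP ih =>
    rw [coe_insert, Set.pairwiseDisjoint_insert] at hdisj
    have hPOs : Disjoint P (Os.biUnion id) := (disjoint_biUnion_right _ _ _).mpr fun Q hQ =>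
      hdisj.2 Q hQ (ne_of_mem_of_not_mem hQ hP).symm
    have hOs' : ∀ Q ∈ Os, Q.image σ = Q := fun Q hQ => hOs Q (mem_insert_of_mem hQ)
    rw [biUnion_insert, id_eq, sum_ratioChange_union hPOs (hOs P (mem_insert_self P Os))
      (image_biUnion_id_eq hOs'), ih hdisj.1 hOs', sum_insert hP]

theorem sum_ratioChange_cycle {r : K} {n : ℕ} (hper : σ^[n + 1] r = r)
    (hinj : Set.InjOn (σ^[·] r) (Set.Iio (n + 1))) :
    ∑ e ∈ ((range (n + 1)).image (σ^[·] r)).sym2 with ¬ e.IsDiag, ratioChange σ e = n := by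
  set x : ℕ → K := (σ^[·] r)
  have hσx (k : ℕ) : σ (x k) = x (k + 1) := (iterate_succ_apply' σ k r).symm
  have hwrap : ∑ i ∈ range (n + 1), ratio (x i) (x (n + 1))
      + ∑ j ∈ range (n + 1), ratio (x 0) (x (j + 1)) = n := by
    have hne (j : ℕ) (hj : j ∈ range n) : x (j + 1) ≠ x 0 := fun h =>
      (Nat.succ_ne_zero j) (hinj (Nat.succ_lt_succ (mem_range.mp hj)) n.succ_pos h)
    rw [sum_range_succ', sum_range_succ, show x (n + 1) = x 0 from hper, ratio_self, add_zero,
      add_zero, ← sum_add_distrib, sum_congr rfl fun j hj => ratio_add_ratio_swap (hne j hj)]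
    simp
  rw [sum_sym2_filter_not_isDiag_image_range hinj]
  simp only [ratioChange_mk, hσx, sum_add_distrib]
  -- Only the pairs `(i, n + 1) = (i, 0)` of `hwrap` survive: they are the ones `σ` reverses.
  linear_combination sum_range_sum_range_shift (fun i j => ratio (x i) (x j)) (n + 1) + hwrap
    + (∑ j ∈ range (n + 1), ∑ i ∈ range j, ratio (x i) (x j)
      - ∑ j ∈ range (n + 1), ratio (x 0) (x (j + 1))) * CharTwo.two_eq_zero (R := K)

end RatioChange

section Orbit

variable {α : Type*} {f : α → α} {r r' : α} {P Q : Finset α}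

def IsOrbit (f : α → α) (r : α) (P : Finset α) : Prop :=
  ∀ x, x ∈ P ↔ ∃ k, f^[k] r = x

namespace IsOrbit

theorem mem_periodicPts (hf : Injective f) (hP : IsOrbit f r P) : r ∈ periodicPts f := by
  obtain ⟨m, n, hmn, heq⟩ := Finite.exists_ne_map_eq_of_infinite
    fun k : ℕ => (⟨f^[k] r, (hP _).mpr ⟨k, rfl⟩⟩ : P)
  have heq : f^[m] r = f^[n] r := congrArg Subtype.val heq
  rcases lt_or_gt_of_ne hmn with h | h
  · exact mk_mem_periodicPts (by omega) (iterate_cancel hf heq.symm)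
  · exact mk_mem_periodicPts (by omega) (iterate_cancel hf heq)

theorem mem_iff_mem_periodicOrbit (hf : Injective f) (hP : IsOrbit f r P) (x : α) :
    x ∈ P ↔ x ∈ periodicOrbit f r :=
  (hP x).trans (mem_periodicOrbit_iff (hP.mem_periodicPts hf)).symm

theorem disjoint (hf : Injective f) (hP : IsOrbit f r P) (hQ : IsOrbit f r' Q) (hPQ : P ≠ Q) :
    Disjoint P Q := by
  refine disjoint_left.mpr fun x hxP hxQ => hPQ ?_
  obtain ⟨a, rfl⟩ := (hP x).mp hxP
  obtain ⟨b, hb⟩ := (hQ _).mp hxQ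
  ext y
  rw [hP.mem_iff_mem_periodicOrbit hf, hQ.mem_iff_mem_periodicOrbit hf,
    ← periodicOrbit_apply_iterate_eq (hP.mem_periodicPts hf) a, ← hb,
    periodicOrbit_apply_iterate_eq (hQ.mem_periodicPts hf) b]

theorem eq_image_range [DecidableEq α] (hf : Injective f) (hP : IsOrbit f r P) :
    P = (range (minimalPeriod f r)).image (f^[·] r) := by
  ext x
  rw [hP.mem_iff_mem_periodicOrbit hf, periodicOrbit, Cycle.mem_coe_iff, List.mem_map]
  simp

theorem card_eq [DecidableEq α] (hf : Injective f) (hP : IsOrbit f r P) :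
    #P = minimalPeriod f r := by
  rw [hP.eq_image_range hf, card_image_of_injOn, card_range]
  simpa using iterate_injOn_Iio_minimalPeriod

theorem image_eq [DecidableEq α] (hf : Injective f) (hP : IsOrbit f r P) : P.image f = P := by
  refine eq_of_subset_of_card_le (fun x hx => ?_) (card_image_of_injective P hf).ge
  obtain ⟨y, hy, rfl⟩ := mem_image.mp hx
  obtain ⟨k, rfl⟩ := (hP y).mp hy
  exact (hP _).mpr ⟨k + 1, iterate_succ_apply' f k r⟩

theorem subset_of_mapsTo {s : Set α} (hs : Set.MapsTo f s s) (hr : r ∈ s) (hP : IsOrbit f r P) :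
    (P : Set α) ⊆ s := fun x hx => by
  obtain ⟨k, rfl⟩ := (hP x).mp hx
  exact hs.iterate k hr

end IsOrbit

end Orbit

section OrbitSum

variable {K : Type*} [Field K] [CharP K 2] [DecidableEq K] {σ : K ↪ K}

theorem IsOrbit.sum_ratioChange {r : K} {P : Finset K} (hP : IsOrbit σ r P) :
    ∑ e ∈ P.sym2 with ¬ e.IsDiag, ratioChange σ e = #P + 1 := by
  have hper := hP.mem_periodicPts σ.injective
  obtain ⟨n, hn⟩ : ∃ n, minimalPeriod σ r = n + 1 :=
    Nat.exists_eq_add_one.mpr (minimalPeriod_pos_of_mem_periodicPts hper)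
  rw [hP.card_eq σ.injective, hP.eq_image_range σ.injective, hn, sum_ratioChange_cycle]
  · push_cast
    linear_combination -CharTwo.two_eq_zero (R := K)
  · rw [← hn]
    exact iterate_minimalPeriod
  · rw [← hn]
    exact iterate_injOn_Iio_minimalPeriod

theorem sum_ratioChange_biUnion_orbits {Os : Finset (Finset K)}
    (hOs : ∀ P ∈ Os, ∃ r, IsOrbit σ r P) :
    ∑ e ∈ (Os.biUnion id).sym2 with ¬ e.IsDiag, ratioChange σ e
      = (#(Os.biUnion id) + #Os : ℕ) := by
  choose r hr using hOs
  have hdisj : (Os : Set (Finset K)).PairwiseDisjoint id := fun P hP Q hQ hPQ =>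
    (hr P hP).disjoint σ.injective (hr Q hQ) hPQ
  rw [sum_ratioChange_biUnion hdisj fun P hP => (hr P hP).image_eq σ.injective,
    card_biUnion hdisj, sum_congr rfl fun P hP => (hr P hP).sum_ratioChange]
  simp [sum_add_distrib]

end OrbitSum

section PairTerm

variable {K : Type*} [Field K]

def pairTerm : Sym2 K → K :=
  Sym2.lift ⟨fun u v => u * v / (u - v) ^ 2, fun u v => by ring⟩

@[simp]
theorem pairTerm_mk (u v : K) : pairTerm s(u, v) = u * v / (u - v) ^ 2 := rfl

theorem pairTerm_inv {u v : K} (hu : u ≠ 0) (hv : v ≠ 0) :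
    pairTerm s(u⁻¹, v⁻¹) = pairTerm s(u, v) := by
  rcases eq_or_ne u v with rfl | h
  · simp
  · have : u - v ≠ 0 := sub_ne_zero.mpr h
    have : v - u ≠ 0 := sub_ne_zero.mpr h.symm
    simp only [pairTerm_mk, inv_sub_inv hu hv]
    field_simp
    ring

theorem pairTerm_pow_expChar_pow (p : ℕ) [ExpChar K p] (n : ℕ) (u v : K) :
    pairTerm s(u, v) ^ p ^ n = pairTerm s(u ^ p ^ n, v ^ p ^ n) := by
  rw [pairTerm_mk, pairTerm_mk, div_pow, mul_pow, ← pow_mul, mul_comm 2, pow_mul,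
    sub_pow_expChar_pow]

theorem pairTerm_pow_eq_map_invPowEmbedding (p : ℕ) [ExpChar K p] (n : ℕ) {u v : K}
    (hu : u ≠ 0) (hv : v ≠ 0) :
    pairTerm s(u, v) ^ p ^ n = pairTerm (s(u, v).map (invPowEmbedding K p n)) := by
  rw [Sym2.map_mk, invPowEmbedding_apply, invPowEmbedding_apply,
    pairTerm_inv (pow_ne_zero _ hu) (pow_ne_zero _ hv), pairTerm_pow_expChar_pow]

theorem sum_range_pairTerm_pow [CharP K 2] {u v : K} (hu : u ≠ 0) (hv : v ≠ 0) (huv : u ≠ v)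
    (m : ℕ) :
    ∑ i ∈ range m, pairTerm s(u, v) ^ 2 ^ i
      = 1 + ratioChange (invPowEmbedding K 2 m) s(u, v) := by
  have hq : u ^ 2 ^ m ≠ v ^ 2 ^ m := (iterateFrobenius_inj K 2 m).ne huv
  rw [pairTerm_mk, mul_div_sub_sq_eq_ratio, sum_range_pow_sub_self_pow, ratio_pow_expChar_pow,
    ratioChange_mk, invPowEmbedding_apply, invPowEmbedding_apply,
    ratio_inv_inv (pow_ne_zero _ hu) (pow_ne_zero _ hv)]
  linear_combination ratio_add_ratio_swap hq
    - (ratio (v ^ 2 ^ m) (u ^ 2 ^ m) + ratio u v) * CharTwo.two_eq_zero (R := K)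

end PairTerm

open scoped Classical in
/-- For `F` of order `q^2`, `q = 2^m`, and `R` a finite subset of the nonzero algebraic
closure that is the union of `t` distinct orbits under `π(x) = x^{-q}`, the sum
`S = Σ_{{u,v}⊆R, u≠v} uv/(u-v)^2` lies in the half field `H` of order `q` (`S^q = S`) and
`Tr_{H/F_2}(S) = S + S^2 + ⋯ + S^(q/2)` equals `binom(|R|+1,2) + t mod 2`. -/
theorem stmt11 (m q : ℕ) (hq : q = 2 ^ m)
    (F : Type) [Field F] [Fintype F] (hF : Fintype.card F = q ^ 2)
    (R : Finset (AlgebraicClosure F)) (t : ℕ)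
    (Os : Finset (Finset (AlgebraicClosure F))) (ht : Os.card = t)
    (horb : ∀ P ∈ Os, ∃ r : AlgebraicClosure F, r ≠ 0 ∧
      ∀ x, x ∈ P ↔ ∃ k : ℕ, (fun y : AlgebraicClosure F => (y ^ q)⁻¹)^[k] r = x)
    (hunion : R = Os.biUnion id) :
    let S : AlgebraicClosure F :=
      ∑ e ∈ R.sym2.filter (fun e => ¬ e.IsDiag),
        Sym2.lift ⟨fun u v => u * v / (u - v) ^ 2, by
          intro a b
          show a * b / (a - b) ^ 2 = b * a / (b - a) ^ 2
          rw [mul_comm a b, show (a - b) ^ 2 = (b - a) ^ 2 from by ring]⟩ e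
    S ^ q = S ∧
      ∑ i ∈ Finset.range m, S ^ 2 ^ i
        = (((R.card + 1).choose 2 + t : ℕ) : AlgebraicClosure F) := by
  subst hq hunion ht
  have : CharP F 2 := charP_of_card_eq_prime_pow (hF.trans (pow_mul 2 m 2).symm)
  set σ := invPowEmbedding (AlgebraicClosure F) 2 m
  have hOs : ∀ P ∈ Os, ∃ r, IsOrbit σ r P := fun P hP => (horb P hP).imp fun _ hr => hr.2
  have hR0 (x : AlgebraicClosure F) (hx : x ∈ Os.biUnion id) : x ≠ 0 := by
    obtain ⟨P, hP, hxP⟩ := mem_biUnion.mp hx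
    obtain ⟨r, hr, hrP⟩ := horb P hP
    exact IsOrbit.subset_of_mapsTo (mapsTo_invPow_ne_zero _) hr hrP hxP
  intro S
  have hS : S = ∑ e ∈ (Os.biUnion id).sym2 with ¬ e.IsDiag, pairTerm e := rfl
  rw [hS]
  constructor
  · rw [sum_pow_char_pow, sum_sym2_filter_not_isDiag_congr (h := fun e => pairTerm (e.map σ))
      fun u hu v hv _ => pairTerm_pow_eq_map_invPowEmbedding 2 m (hR0 u hu) (hR0 v hv)]
    exact sum_sym2_filter_not_isDiag_map σ.injective
      (image_biUnion_id_eq fun P hP => (hOs P hP).choose_spec.image_eq σ.injective) _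
  · simp_rw [sum_pow_char_pow]
    rw [sum_comm, sum_sym2_filter_not_isDiag_congr (h := fun e => 1 + ratioChange σ e)
      fun u hu v hv huv =>
      sum_range_pairTerm_pow (hR0 u hu) (hR0 v hv) huv m, sum_add_distrib, sum_const,
      card_sym2_filter_not_isDiag, sum_ratioChange_biUnion_orbits hOs, Nat.choose_succ_succ,
      Nat.choose_one_right]
    push_cast
    ring
end

section
/- Let F be a finite field of order q^2 with q a power of 2, let a ∈ F, and let g(x) = x^7 − a x^4 − a^q x^3 + 1. Then g is inseparable (i.e., gcd(g, g') ≠ 1) if and only if a^(q+1) = 1. -/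
open Polynomial

/-- For `F` of order `q^2`, `q = 2^m`, and `a ∈ F`, the key polynomial
`g(x) = x^7 - a x^4 - a^q x^3 + 1` is inseparable iff `a` lies on the unit circle,
i.e. `a^(q+1) = 1`. -/
theorem stmt12 (m q : ℕ) (hm : 0 < m) (hq : q = 2 ^ m)
    (F : Type) [Field F] [Fintype F] (hF : Fintype.card F = q ^ 2) (a : F) :
    ¬ (Polynomial.X ^ 7 - Polynomial.C a * Polynomial.X ^ 4
        - Polynomial.C (a ^ q) * Polynomial.X ^ 3 + 1 : Polynomial F).Separable
      ↔ a ^ (q + 1) = 1 := by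
  set g : Polynomial F := X ^ 7 - C a * X ^ 4 - C (a ^ q) * X ^ 3 + 1 with hg
  -- characteristic 2
  have h2 : (2 : F) = 0 := by
    have hc : ((Fintype.card F : ℕ) : F) = 0 := FiniteField.cast_card_eq_zero F
    rw [hF, hq] at hc
    push_cast at hc
    have hpow : (2 : F) ^ (m * 2) = 0 := by
      rw [← pow_mul] at hc; exact hc
    have hmn : m * 2 ≠ 0 := by positivity
    exact (pow_eq_zero_iff hmn).mp hpow
  -- x ↦ x^4 is surjective
  have hsurj : Function.Surjective (fun x : F => x ^ 4) := by
    apply Finite.injective_iff_surjective.mp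
    intro x y h
    simp only at h
    have h4 : (x - y) ^ 4 = 0 := by
      linear_combination h + (y^4 - 2*x^3*y + 3*x^2*y^2 - 2*x*y^3) * h2
    exact sub_eq_zero.mp ((pow_eq_zero_iff (n := 4) (by norm_num)).mp h4)
  obtain ⟨b, hb⟩ := hsurj (a ^ q)
  simp only at hb
  have h2' : (2 : Polynomial F) = 0 := by
    rw [← map_ofNat (C : F →+* Polynomial F) 2, h2, map_zero]
  have hCb : (C b : Polynomial F) ^ 4 = C (a ^ q) := by rw [← map_pow, hb]
  -- derivative computation
  have hderiv : derivative g = X ^ 2 * (X - C b) ^ 4 := by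
    rw [hg]
    simp only [derivative_add, derivative_sub, derivative_one, derivative_mul,
      derivative_C, derivative_X_pow, C_eq_natCast]
    push_cast
    linear_combination (X:Polynomial F)^2 * hCb.symm +
      ((3:Polynomial F) * X^6 - 2 * C a * X^3 - 2 * C (a^q) * X^2
        + 2 * X^5 * C b - 3 * X^4 * (C b)^2 + 2 * X^3 * (C b)^3) * h2'
  -- evaluation at b
  have heval : g.eval b = 1 - a ^ (q + 1) := by
    rw [hg]
    simp only [eval_add, eval_sub, eval_mul, eval_pow, eval_X, eval_C, eval_one]
    linear_combination (b ^ 3 - a) * hb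
  have heval0 : g.eval 0 = 1 := by
    rw [hg]; simp
  constructor
  · intro hns
    by_contra hne
    apply hns
    rw [Polynomial.Separable, hderiv]
    have hXg : IsCoprime (X : Polynomial F) g := by
      rw [Polynomial.irreducible_X.coprime_iff_not_dvd, X_dvd_iff]
      have := heval0
      rw [eval, eval₂_at_zero] at this
      simp only [RingHom.id_apply] at this
      rw [this]; exact one_ne_zero
    have hXbg : IsCoprime (X - C b : Polynomial F) g := by
      rw [(Polynomial.irreducible_X_sub_C b).coprime_iff_not_dvd, dvd_iff_isRoot,
        IsRoot, heval]
      intro h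
      exact hne ((sub_eq_zero.mp h).symm)
    exact (hXg.symm.pow_right).mul_right (hXbg.symm.pow_right)
  · intro hone hsep
    have hroot : g.eval b = 0 := by rw [heval, hone, sub_self]
    have hdvd1 : (X - C b) ∣ g := dvd_iff_isRoot.mpr hroot
    have hdvd2 : (X - C b) ∣ derivative g := by
      rw [hderiv]
      exact Dvd.dvd.mul_left (dvd_pow_self _ (by norm_num)) _
    exact Polynomial.not_isUnit_X_sub_C b (hsep.isUnit_of_dvd' hdvd1 hdvd2)
end

section
/- Let F be a finite field of order q^2 with q an even power of 2 (i.e., [F:F_4] even), and let a ∈ F with a^(q+1) = 1 and a ≠ 1. Then the polynomial g(x) = x^7 + a x^4 + a^q x^3 + 1 has exactly two distinct roots lying in U_F = {u ∈ F : u^(q+1) = 1}: a root of multiplicity 4 (the unique fourth root of a^{−1} in U_F) and exactly one simple root (the unique cube root of a in U_F); the other two roots of g lie in F \ U_F. -/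
open Polynomial

/-- For `F` of order `q^2` with `q = 2^m`, `m` even, and `a ∈ F` with `a^(q+1) = 1`, `a ≠ 1`,
the polynomial `g(x) = x^7 + a x^4 + a^q x^3 + 1` has exactly two distinct roots on the unit
circle `U_F`: a root `b` of multiplicity `4` (the unique fourth root of `a⁻¹` in `U_F`) and
a simple root `c` (the unique cube root of `a` in `U_F`); the other two roots of `g` lie in
`F \ U_F`. -/
theorem stmt14 (m q : ℕ) (hm : 0 < m) (hmeven : Even m) (hq : q = 2 ^ m)
    (F : Type) [Field F] [Fintype F] (hF : Fintype.card F = q ^ 2)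
    (a : F) (ha : a ^ (q + 1) = 1) (ha1 : a ≠ 1) :
    ∃ b c : F, b ^ (q + 1) = 1 ∧ c ^ (q + 1) = 1 ∧ b ^ 4 = a⁻¹ ∧ c ^ 3 = a ∧ b ≠ c ∧
      (∀ x : F, x ^ (q + 1) = 1 → x ^ 4 = a⁻¹ → x = b) ∧
      (∀ x : F, x ^ (q + 1) = 1 → x ^ 3 = a → x = c) ∧
      {u : F | u ^ (q + 1) = 1 ∧
          Polynomial.eval u (Polynomial.X ^ 7 + Polynomial.C a * Polynomial.X ^ 4
            + Polynomial.C (a ^ q) * Polynomial.X ^ 3 + 1 : Polynomial F) = 0} = {b, c} ∧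
      (Polynomial.X ^ 7 + Polynomial.C a * Polynomial.X ^ 4
          + Polynomial.C (a ^ q) * Polynomial.X ^ 3 + 1 : Polynomial F).rootMultiplicity b
        = 4 ∧
      (Polynomial.X ^ 7 + Polynomial.C a * Polynomial.X ^ 4
          + Polynomial.C (a ^ q) * Polynomial.X ^ 3 + 1 : Polynomial F).rootMultiplicity c
        = 1 ∧
      {u : F | Polynomial.eval u (Polynomial.X ^ 7 + Polynomial.C a * Polynomial.X ^ 4
          + Polynomial.C (a ^ q) * Polynomial.X ^ 3 + 1 : Polynomial F) = 0 ∧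
        u ^ (q + 1) ≠ 1}.ncard = 2 := by
  -- characteristic 2
  have hchar2 : ringChar F = 2 := by
    obtain ⟨n, hp, hcard⟩ := FiniteField.card F (ringChar F)
    have h2 : Fintype.card F = 2 ^ (m * 2) := by rw [hF, hq, ← pow_mul]
    have hdvd : ringChar F ∣ 2 ^ (m * 2) := by
      rw [← h2, hcard]
      exact dvd_pow_self _ n.pos.ne'
    exact (Nat.prime_dvd_prime_iff_eq hp Nat.prime_two).mp (hp.dvd_of_dvd_pow hdvd)
  haveI hC2 : CharP F 2 := hchar2 ▸ ringChar.charP F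
  -- basic numerics
  obtain ⟨j, hj⟩ := hmeven
  have hmj : m = 2 * j := by omega
  have hj0 : 0 < j := by omega
  have hq4 : q = 4 ^ j := by rw [hq, hmj, pow_mul]; norm_num
  have hq3 : q % 3 = 1 := by
    rw [hq4, Nat.pow_mod]; norm_num
  have hqge : 4 ≤ q := by
    rw [hq4]
    calc 4 = 4 ^ 1 := by norm_num
    _ ≤ 4 ^ j := Nat.pow_le_pow_right (by norm_num) hj0
  have hq7 : q % 7 = 1 ∨ q % 7 = 4 ∨ q % 7 = 2 := by
    have h1 : 4 ^ j % 7 = 4 ^ (j % 3) % 7 := by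
      conv_lhs => rw [← Nat.div_add_mod j 3]
      rw [pow_add, pow_mul, Nat.mul_mod, Nat.pow_mod]
      norm_num [Nat.pow_mod]
    have h2 : j % 3 < 3 := Nat.mod_lt _ (by norm_num)
    interval_cases h : (j % 3) <;> rw [hq4, h1] <;> norm_num
  have hdvd4 : 4 ∣ q := by
    rw [hq4]; exact dvd_pow_self 4 hj0.ne'
  obtain ⟨t, ht⟩ := hdvd4
  obtain ⟨s, hs⟩ : ∃ s, q = 3 * s + 1 := ⟨q / 3, by omega⟩
  -- a basics
  have ha0 : a ≠ 0 := by
    intro h; rw [h] at ha; simp at ha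
  have hai : a⁻¹ ^ (q + 1) = 1 := by rw [inv_pow, ha, inv_one]
  have haq : a ^ q = a⁻¹ := by
    apply eq_inv_of_mul_eq_one_left
    rw [← pow_succ]; exact ha
  -- the contradiction lemma : a ^ 7 = 1 → False
  have ha7 : a ^ 7 ≠ 1 := by
    intro h7
    apply ha1
    have hd1 : orderOf a ∣ 7 := orderOf_dvd_of_pow_eq_one h7
    have hd2 : orderOf a ∣ q + 1 := orderOf_dvd_of_pow_eq_one ha
    have hd : orderOf a ∣ Nat.gcd 7 (q + 1) := Nat.dvd_gcd hd1 hd2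
    have hnd : ¬ (7 ∣ q + 1) := by omega
    have hg : Nat.gcd 7 (q + 1) = 1 :=
      (Nat.Prime.coprime_iff_not_dvd (by norm_num)).mpr hnd
    rw [hg, Nat.dvd_one] at hd
    exact orderOf_eq_one_iff.mp hd
  -- define b and c
  set b : F := a⁻¹ ^ (3 * t + 1) with hbdef
  set c : F := a ^ (s + 1) with hcdef
  have hbu : b ^ (q + 1) = 1 := by
    rw [hbdef, ← pow_mul, mul_comm (3 * t + 1) (q + 1), pow_mul, hai, one_pow]
  have hcu : c ^ (q + 1) = 1 := by
    rw [hcdef, ← pow_mul, mul_comm (s + 1) (q + 1), pow_mul, ha, one_pow]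
  have hb4 : b ^ 4 = a⁻¹ := by
    rw [hbdef, ← pow_mul]
    have he : (3 * t + 1) * 4 = 3 * (q + 1) + 1 := by omega
    rw [he, pow_succ, mul_comm 3 (q + 1), pow_mul, hai, one_pow, one_mul]
  have hc3 : c ^ 3 = a := by
    rw [hcdef, ← pow_mul]
    have he : (s + 1) * 3 = (q + 1) + 1 := by omega
    rw [he, pow_succ, ha, one_mul]
  have hc0 : c ≠ 0 := by
    intro h; rw [h] at hc3; simp at hc3; exact ha0 hc3.symm
  -- uniqueness
  have hbuniq : ∀ x : F, x ^ (q + 1) = 1 → x ^ 4 = a⁻¹ → x = b := by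
    intro x hx1 hx4
    calc x = (x ^ (q + 1)) ^ 3 * x := by rw [hx1]; ring
    _ = x ^ (3 * (q + 1) + 1) := by rw [← pow_mul, ← pow_succ, mul_comm]
    _ = (x ^ 4) ^ (3 * t + 1) := by rw [← pow_mul]; congr 1; omega
    _ = b := by rw [hx4]
  have hcuniq : ∀ x : F, x ^ (q + 1) = 1 → x ^ 3 = a → x = c := by
    intro x hx1 hx3
    calc x = (x ^ (q + 1)) * x := by rw [hx1]; ring
    _ = x ^ ((q + 1) + 1) := by rw [← pow_succ]
    _ = (x ^ 3) ^ (s + 1) := by rw [← pow_mul]; congr 1; omega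
    _ = c := by rw [hx3]
  -- b^3 ≠ a
  have hb3 : b ^ 3 ≠ a := by
    intro h3
    apply ha7
    have h12 : a ^ 4 = (a⁻¹) ^ 3 := by
      calc a ^ 4 = (b ^ 3) ^ 4 := by rw [h3]
      _ = (b ^ 4) ^ 3 := by ring
      _ = (a⁻¹) ^ 3 := by rw [hb4]
    calc a ^ 7 = a ^ 4 * a ^ 3 := by ring
    _ = (a⁻¹) ^ 3 * a ^ 3 := by rw [h12]
    _ = (a⁻¹ * a) ^ 3 := by rw [mul_pow]
    _ = 1 := by rw [inv_mul_cancel₀ ha0, one_pow]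
  have hbc : b ≠ c := by
    intro h
    exact hb3 (by rw [h, hc3])
  clear_value b c
  -- char-two facts
  have haddself : ∀ x : F, x + x = 0 := fun x => CharTwo.add_self_eq_zero x
  -- the polynomial and its factorization
  set g : F[X] := X ^ 7 + C a * X ^ 4 + C (a ^ q) * X ^ 3 + 1 with hgdef
  have hfact : g = (X - C b) ^ 4 * (X ^ 3 + C a) := by
    have h4 : ((X - C b) ^ 4 : F[X]) = X ^ 4 + C a⁻¹ := by
      have e1 : ((X - C b) ^ 4 : F[X]) = ((X - C b) ^ 2) ^ 2 := by ring
      rw [e1, sub_pow_char, sub_pow_char, ← pow_mul, ← pow_mul, ← map_pow]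
      norm_num [hb4, sub_eq_add_neg, CharTwo.neg_eq]
    rw [hgdef, haq, h4]
    have hCa : (C a⁻¹ * C a : F[X]) = 1 := by
      rw [← C_mul, inv_mul_cancel₀ ha0, C_1]
    calc (X ^ 7 + C a * X ^ 4 + C a⁻¹ * X ^ 3 + 1 : F[X])
        = X ^ 7 + C a * X ^ 4 + C a⁻¹ * X ^ 3 + C a⁻¹ * C a := by rw [hCa]
    _ = (X ^ 4 + C a⁻¹) * (X ^ 3 + C a) := by ring
  have heval : ∀ x : F, eval x g = (x - b) ^ 4 * (x ^ 3 + a) := by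
    intro x; rw [hfact]; simp
  -- nonzeroness
  have hmonic3 : (X ^ 3 + C a : F[X]).Monic := monic_X_pow_add_C a (by norm_num)
  have hg0 : g ≠ 0 := by
    rw [hfact]
    exact mul_ne_zero (pow_ne_zero _ (X_sub_C_ne_zero b)) hmonic3.ne_zero
  -- eval characterization
  have hroot : ∀ x : F, eval x g = 0 ↔ (x = b ∨ x ^ 3 = a) := by
    intro x
    rw [heval, mul_eq_zero, pow_eq_zero_iff (by norm_num : (4:ℕ) ≠ 0), sub_eq_zero]
    constructor
    · rintro (h | h)
      · exact Or.inl h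
      · right; linear_combination h - haddself a
    · rintro (h | h)
      · exact Or.inl h
      · right; rw [h]; exact haddself a
  -- cube roots of unity
  haveI : DecidableEq F := Classical.decEq F
  haveI : Fact (Nat.Prime 3) := ⟨by norm_num⟩
  have h3card : 3 ∣ Fintype.card Fˣ := by
    rw [Fintype.card_units, hF]
    have : q ^ 2 % 3 = 1 := by rw [Nat.pow_mod, hq3]
    omega
  obtain ⟨ζ, hζ⟩ := exists_prime_orderOf_dvd_card 3 h3card
  set ω : F := (ζ : F) with hwdef
  have hw3 : ω ^ 3 = 1 := by
    have h : ζ ^ 3 = 1 := by rw [← hζ]; exact pow_orderOf_eq_one ζ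
    rw [hwdef, ← Units.val_pow_eq_pow_val, h, Units.val_one]
  have hw1 : ω ≠ 1 := by
    intro h
    have hz : ζ = 1 := Units.ext (by rw [← hwdef, h, Units.val_one])
    rw [hz, orderOf_one] at hζ
    norm_num at hζ
  have hwsum : ω ^ 2 + ω + 1 = 0 := by
    have hne : ω - 1 ≠ 0 := sub_ne_zero.mpr hw1
    have hz : (ω - 1) * (ω ^ 2 + ω + 1) = 0 := by linear_combination hw3
    rcases mul_eq_zero.mp hz with h | h
    · exact absurd h hne
    · exact h
  have hwq : ω ^ (q + 1) ≠ 1 := by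
    intro h
    have hz : ζ ^ (q + 1) = 1 := Units.ext (by
      rw [Units.val_pow_eq_pow_val, ← hwdef, h, Units.val_one])
    have h3 : (3 : ℕ) ∣ q + 1 := hζ ▸ orderOf_dvd_of_pow_eq_one hz
    omega
  clear_value ω
  have hww : ω ^ 2 ≠ ω := by
    intro h
    apply hw1
    have h1 : ω ^ 3 = ω ^ 2 := by linear_combination ω * h
    rw [hw3, h] at h1
    exact h1.symm
  -- classification of cube roots of a
  have hcube : ∀ x : F, x ^ 3 = a → x = c ∨ x = ω * c ∨ x = ω ^ 2 * c := by
    intro x hx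
    have hprod : (x - c) * (x - ω * c) * (x - ω ^ 2 * c) = x ^ 3 - c ^ 3 := by
      linear_combination (-(c * x ^ 2) + c ^ 2 * x) * hwsum + (c ^ 2 * x - c ^ 3) * hw3
    rw [hx, hc3] at hprod
    have hz : (x - c) * (x - ω * c) * (x - ω ^ 2 * c) = 0 := by rw [hprod]; ring
    rcases mul_eq_zero.mp hz with h | h
    · rcases mul_eq_zero.mp h with h | h
      · exact Or.inl (sub_eq_zero.mp h)
      · exact Or.inr (Or.inl (sub_eq_zero.mp h))
    · exact Or.inr (Or.inr (sub_eq_zero.mp h))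
  have hwc1 : (ω * c) ^ (q + 1) ≠ 1 := by
    intro h
    apply hwq
    rwa [mul_pow, hcu, mul_one] at h
  have hw2q : (ω ^ 2) ^ (q + 1) ≠ 1 := by
    intro h
    apply hwq
    have h2 : (ω ^ (q + 1)) ^ 2 = 1 := by
      rw [← pow_mul, mul_comm]; rw [← pow_mul] at h; exact h
    have h3 : (ω ^ (q + 1)) ^ 3 = 1 := by
      rw [← pow_mul, mul_comm, pow_mul, hw3, one_pow]
    have he : ω ^ (q + 1) * (ω ^ (q + 1)) ^ 2 = (ω ^ (q + 1)) ^ 3 := by ring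
    rwa [h2, h3, mul_one] at he
  have hwc2 : (ω ^ 2 * c) ^ (q + 1) ≠ 1 := by
    intro h
    apply hw2q
    rwa [mul_pow, hcu, mul_one] at h
  -- final assembly
  refine ⟨b, c, hbu, hcu, hb4, hc3, hbc, hbuniq, hcuniq, ?_, ?_, ?_, ?_⟩
  · -- set on circle = {b, c}
    ext x
    simp only [Set.mem_setOf_eq, Set.mem_insert_iff, Set.mem_singleton_iff]
    constructor
    · rintro ⟨hx1, hx0⟩
      rcases (hroot x).mp hx0 with h | h
      · exact Or.inl h
      · exact Or.inr (hcuniq x hx1 h)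
    · rintro (rfl | rfl)
      · exact ⟨hbu, (hroot _).mpr (Or.inl rfl)⟩
      · exact ⟨hcu, (hroot _).mpr (Or.inr hc3)⟩
  · -- rootMultiplicity b = 4
    rw [hfact, rootMultiplicity_mul (hfact ▸ hg0), rootMultiplicity_X_sub_C_pow,
      rootMultiplicity_eq_zero]
    · intro hr
      have h : b ^ 3 + a = 0 := by simpa using hr
      exact hb3 (by linear_combination h - haddself a)
  · -- rootMultiplicity c = 1
    have hsplit : (X ^ 3 + C a : F[X]) = (X - C c) * (X ^ 2 + C c * X + C (c ^ 2)) := by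
      rw [← hc3, map_pow, map_pow]
      linear_combination CharTwo.add_self_eq_zero ((C c : F[X]) ^ 3)
    have h1 : ((X - C b) ^ 4 : F[X]).rootMultiplicity c = 0 := by
      rw [rootMultiplicity_eq_zero]
      intro hr
      have h : (c - b) ^ 4 = 0 := by simpa using hr
      exact hbc (sub_eq_zero.mp ((pow_eq_zero_iff (by norm_num : (4:ℕ) ≠ 0)).mp h)).symm
    have h2 : (X ^ 2 + C c * X + C (c ^ 2) : F[X]).rootMultiplicity c = 0 := by
      rw [rootMultiplicity_eq_zero]
      intro hr
      have h : c ^ 2 + c * c + c ^ 2 = 0 := by simpa using hr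
      exact pow_ne_zero 2 hc0 (by linear_combination h - haddself (c ^ 2))
    have h4 : ((X - C c) * (X ^ 2 + C c * X + C (c ^ 2)) : F[X]) ≠ 0 :=
      hsplit ▸ hmonic3.ne_zero
    rw [hfact, rootMultiplicity_mul (hfact ▸ hg0), h1, hsplit,
      rootMultiplicity_mul h4, rootMultiplicity_X_sub_C_self, h2]
  · -- off-circle count
    have hset : {u : F | eval u g = 0 ∧ u ^ (q + 1) ≠ 1} = {ω * c, ω ^ 2 * c} := by
      ext x
      simp only [Set.mem_setOf_eq, Set.mem_insert_iff, Set.mem_singleton_iff]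
      constructor
      · rintro ⟨hx0, hx1⟩
        rcases (hroot x).mp hx0 with h | h
        · exact absurd (h ▸ hbu) hx1
        · rcases hcube x h with h | h | h
          · exact absurd (h ▸ hcu) hx1
          · exact Or.inl h
          · exact Or.inr h
      · rintro (rfl | rfl)
        · refine ⟨(hroot _).mpr (Or.inr ?_), hwc1⟩
          rw [mul_pow, hw3, hc3, one_mul]
        · refine ⟨(hroot _).mpr (Or.inr ?_), hwc2⟩
          rw [mul_pow, ← pow_mul, mul_comm 2 3, pow_mul, hw3, one_pow, hc3, one_mul]
    rw [hset]
    apply Set.ncard_pair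
    intro h
    have hz : (ω ^ 2 - ω) * c = 0 := by linear_combination -h
    rcases mul_eq_zero.mp hz with h' | h'
    · exact hww (sub_eq_zero.mp h')
    · exact hc0 h'
end
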